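/- arXiv:1204.0429 — 2 statements merged into one kernel-verified Lean document; each statement's English description precedes it below -/
import Mathlib

section
/- Let X be a random vector with positive finite information dimension d(X), and let Y = g(X) for a measurable function g. If the conditional information dimension d(X|Y=y) exists and is finite for P_Y-almost every y, then the relative information loss equals l(X→Y) = d(X|Y)/d(X), where d(X|Y) = ∫ d(X|Y=y) dP_Y(y). -/
/-!
Write `H_k(μ)` for the entropy of the quantization of `μ` at scale `1/k` and `κ` for the
conditional distribution of `X` given `Y`, so that `H(X̂ₖ | Y) = ∫ H_k(κ_y) dP_Y(y)`. Since
`H_k(κ_y) / log k → d(X | Y = y)` for almost every `y`, it suffices to pass the limit under the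
integral, by dominated convergence. Refining the quantization from scale `1/k₀` to `1/k` splits
each cell into at most `(k + 1)^N` cells, so `H_k(κ_y) ≤ H_{k₀}(κ_y) + N log (k + 1)`, and hence
`H_k(κ_y) / log k ≤ H_{k₀}(κ_y) + 2N` for `k ≥ 3`. By concavity of entropy
`∫ H_{k₀}(κ_y) dP_Y(y) ≤ H_{k₀}(P_X)`, which is finite for some `k₀` because `d(X) > 0` forces
`H(X̂_{k₀}) > 0` (an infinite entropy would be the junk value `0` of `mEnt`).
-/

open MeasureTheory ProbabilityTheory Filter Real Set

/-- Component quantization `x ↦ ⌊kx⌋/k`. -/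
noncomputable def qz (k : ℕ) (x : ℝ) : ℝ := ⌊(k : ℝ) * x⌋ / k

/-- Shannon entropy (in nats) of a measure, computed from its atoms. -/
noncomputable def mEnt {α : Type*} [MeasurableSpace α] (μ : Measure α) : ℝ :=
  ∑' a : α, Real.negMulLog (μ {a}).toReal

/-- Conditional Shannon entropy `H(Z | Y)`, via the regular conditional distribution. -/
noncomputable def condEnt {Ω α β : Type*} [MeasurableSpace Ω] [MeasurableSpace α]
    [StandardBorelSpace α] [Nonempty α] [MeasurableSpace β]
    (P : Measure Ω) [IsFiniteMeasure P] (Z : Ω → α) (Y : Ω → β) : ℝ :=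
  ∫ y, mEnt ((condDistrib Z Y P) y) ∂(P.map Y)

open scoped ENNReal

/-- Entropy with values in `ℝ≥0∞`: unlike `mEnt`, it does not collapse an infinite entropy to
the junk value `0` of a non-summable `tsum`. -/
noncomputable def eEnt {α : Type*} [MeasurableSpace α] (μ : Measure α) : ℝ≥0∞ :=
  ∑' a : α, ENNReal.ofReal (negMulLog (μ {a}).toReal)

lemma mul_neg_log_le_negMulLog {x t : ℝ} (hx : 0 ≤ x) (hxt : x ≤ t) :
    x * -log t ≤ negMulLog x := by
  rcases hx.eq_or_lt with rfl | hx
  · simp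
  · rw [negMulLog, neg_mul, ← mul_neg]
    exact mul_le_mul_of_nonneg_left (neg_le_neg (log_le_log hx hxt)) hx.le

lemma ofReal_negMulLog_tsum_le {ι : Type*} (p : ι → ℝ≥0∞) (hp : ∑' i, p i ≤ 1) :
    ENNReal.ofReal (negMulLog (∑' i, p i).toReal)
      ≤ ∑' i, ENNReal.ofReal (negMulLog (p i).toReal) := by
  have hfin : ∑' i, p i ≠ ∞ := ne_top_of_le_ne_top ENNReal.one_ne_top hp
  set t := (∑' i, p i).toReal
  calc ENNReal.ofReal (negMulLog t) = (∑' i, p i) * ENNReal.ofReal (-log t) := by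
        rw [negMulLog, neg_mul, ← mul_neg, ENNReal.ofReal_mul ENNReal.toReal_nonneg,
          ENNReal.ofReal_toReal hfin]
    _ = ∑' i, p i * ENNReal.ofReal (-log t) := ENNReal.tsum_mul_right.symm
    _ ≤ ∑' i, ENNReal.ofReal (negMulLog (p i).toReal) := ENNReal.tsum_le_tsum fun i => by
        have hpi : p i ≠ ∞ := ne_top_of_le_ne_top hfin (ENNReal.le_tsum i)
        rw [← ENNReal.ofReal_toReal hpi, ← ENNReal.ofReal_mul ENNReal.toReal_nonneg,
          ENNReal.toReal_ofReal ENNReal.toReal_nonneg]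
        exact ENNReal.ofReal_le_ofReal (mul_neg_log_le_negMulLog ENNReal.toReal_nonneg
          (ENNReal.toReal_mono hfin (ENNReal.le_tsum i)))

lemma sum_negMulLog_le {ι : Type*} (s : Finset ι) {p : ι → ℝ} (hp : ∀ i ∈ s, 0 ≤ p i) :
    ∑ i ∈ s, negMulLog (p i) ≤ negMulLog (∑ i ∈ s, p i) + (∑ i ∈ s, p i) * log s.card := by
  rcases s.eq_empty_or_nonempty with rfl | hs
  · simp
  have hm : (0 : ℝ) < s.card := by exact_mod_cast hs.card_pos
  have hJ := concaveOn_negMulLog.le_map_sum (t := s) (w := fun _ => (s.card : ℝ)⁻¹) (p := p)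
    (fun _ _ => by positivity) (by simp [hm.ne']) hp
  have hinv : negMulLog (s.card : ℝ)⁻¹ = (s.card : ℝ)⁻¹ * log s.card := by
    simp [negMulLog, log_inv]
  simp only [smul_eq_mul, ← Finset.mul_sum, negMulLog_mul, hinv] at hJ
  field_simp at hJ
  linarith

lemma tsum_ofReal_negMulLog_le_of_support_subset {ι : Type*} (p : ι → ℝ≥0∞)
    (hp : ∑' i, p i ≤ 1) (s : Finset ι) (hs : ∀ i, p i ≠ 0 → i ∈ s) :
    ∑' i, ENNReal.ofReal (negMulLog (p i).toReal)
      ≤ ENNReal.ofReal (negMulLog (∑' i, p i).toReal)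
        + (∑' i, p i) * ENNReal.ofReal (log s.card) := by
  have hout : ∀ i ∉ s, p i = 0 := fun i hi => by_contra fun h => hi (hs i h)
  have hp1 : ∀ i, p i ≤ 1 := fun i => (ENNReal.le_tsum i).trans hp
  have hpfin : ∀ i, p i ≠ ∞ := fun i => ne_top_of_le_ne_top ENNReal.one_ne_top (hp1 i)
  have hnonneg : ∀ i, 0 ≤ negMulLog (p i).toReal := fun i =>
    negMulLog_nonneg ENNReal.toReal_nonneg
      (ENNReal.toReal_le_of_le_ofReal zero_le_one (ENNReal.ofReal_one ▸ hp1 i))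
  calc ∑' i, ENNReal.ofReal (negMulLog (p i).toReal)
      = ENNReal.ofReal (∑ i ∈ s, negMulLog (p i).toReal) := by
        rw [tsum_eq_sum fun i hi => by simp [hout i hi],
          ENNReal.ofReal_sum_of_nonneg fun i _ => hnonneg i]
    _ ≤ ENNReal.ofReal (negMulLog (∑ i ∈ s, (p i).toReal)
          + (∑ i ∈ s, (p i).toReal) * log s.card) :=
        ENNReal.ofReal_le_ofReal (sum_negMulLog_le s fun i _ => ENNReal.toReal_nonneg)
    _ ≤ ENNReal.ofReal (negMulLog (∑ i ∈ s, (p i).toReal))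
          + ENNReal.ofReal ((∑ i ∈ s, (p i).toReal) * log s.card) := ENNReal.ofReal_add_le
    _ = ENNReal.ofReal (negMulLog (∑' i, p i).toReal)
          + (∑' i, p i) * ENNReal.ofReal (log s.card) := by
        rw [tsum_eq_sum hout, ← ENNReal.toReal_sum fun i _ => hpfin i,
          ENNReal.ofReal_mul ENNReal.toReal_nonneg,
          ENNReal.ofReal_toReal (ENNReal.sum_ne_top.2 fun i _ => hpfin i)]

section Entropy

variable {γ γ' : Type*} [MeasurableSpace γ] [MeasurableSpace γ']

lemma mEnt_eq_toReal_eEnt (μ : Measure γ) [IsZeroOrProbabilityMeasure μ] :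
    mEnt μ = (eEnt μ).toReal := by
  rw [eEnt, ENNReal.tsum_toReal_eq fun _ => ENNReal.ofReal_ne_top, mEnt]
  exact tsum_congr fun a => (ENNReal.toReal_ofReal
    (negMulLog_nonneg measureReal_nonneg measureReal_le_one)).symm

lemma eEnt_map_of_injective [MeasurableSingletonClass γ']
    (μ : Measure γ) {e : γ → γ'} (he : Measurable e) (hinj : Function.Injective e) :
    eEnt (μ.map e) = eEnt μ := by
  have hpre : ∀ a, (μ.map e) {e a} = μ {a} := fun a => by
    rw [Measure.map_apply he (measurableSet_singleton _), ← Set.image_singleton,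
      hinj.preimage_image]
  rw [eEnt, eEnt, ← hinj.tsum_eq]
  · simp_rw [hpre]
  · refine fun b hb => by_contra fun hrange => hb ?_
    simp [Measure.map_apply he (measurableSet_singleton _),
      Set.preimage_singleton_eq_empty.2 hrange]

lemma eEnt_map_le [Countable γ] [MeasurableSingletonClass γ] [MeasurableSingletonClass γ']
    (μ : Measure γ) [IsZeroOrProbabilityMeasure μ] {f : γ → γ'} (hf : Measurable f) :
    eEnt (μ.map f) ≤ eEnt μ := by
  have hfiber : ∀ b, ∑' a : f ⁻¹' {b}, μ {(a : γ)} = μ (f ⁻¹' {b}) := fun b => by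
    simpa using tsum_measure_preimage_singleton (μ := μ) (f := id) (Set.to_countable (f ⁻¹' {b}))
      fun _ _ => measurableSet_singleton _
  calc eEnt (μ.map f)
      = ∑' b, ENNReal.ofReal (negMulLog (∑' a : f ⁻¹' {b}, μ {(a : γ)}).toReal) := by
        simp_rw [eEnt, hfiber, Measure.map_apply hf (measurableSet_singleton _)]
    _ ≤ ∑' b, ∑' a : f ⁻¹' {b}, ENNReal.ofReal (negMulLog (μ {(a : γ)}).toReal) :=
        ENNReal.tsum_le_tsum fun b => ofReal_negMulLog_tsum_le _ (hfiber b ▸ prob_le_one)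
    _ = eEnt μ := ENNReal.tsum_fiberwise (fun a => ENNReal.ofReal (negMulLog (μ {a}).toReal)) f

lemma measure_map_fst_singleton [MeasurableSingletonClass γ] [MeasurableSingletonClass γ']
    [Countable γ'] (σ : Measure (γ × γ')) (b : γ) :
    σ.map Prod.fst {b} = ∑' c, σ {(b, c)} := by
  have hfiber : Prod.fst ⁻¹' {b} = ⋃ c : γ', {(b, c)} := by
    ext ⟨u, v⟩
    simp [eq_comm]
  rw [Measure.map_apply measurable_fst (measurableSet_singleton b), hfiber,
    measure_iUnion (fun c c' hcc' => by simpa using hcc') fun _ => measurableSet_singleton _]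

lemma eEnt_le_eEnt_map_fst_add_log [MeasurableSingletonClass γ] [MeasurableSingletonClass γ']
    [Countable γ'] (σ : Measure (γ × γ')) [IsZeroOrProbabilityMeasure σ] (T : γ → Finset γ')
    {M : ℕ} (hT : ∀ b c, σ {(b, c)} ≠ 0 → c ∈ T b) (hM : ∀ b, (T b).card ≤ M) :
    eEnt σ ≤ eEnt (σ.map Prod.fst) + ENNReal.ofReal (log M) := by
  have hlog : ∀ b, log (T b).card ≤ log M := fun b => by
    rcases Nat.eq_zero_or_pos (T b).card with h | h
    · simp [h, log_natCast_nonneg]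
    · exact log_le_log (by exact_mod_cast h) (by exact_mod_cast hM b)
  have hmass : ∑' b, σ.map Prod.fst {b} ≤ 1 :=
    (tsum_meas_le_meas_iUnion_of_disjoint _ (fun b => measurableSet_singleton b)
      fun b b' hbb' => Set.disjoint_singleton.2 hbb').trans prob_le_one
  calc eEnt σ = ∑' b, ∑' c, ENNReal.ofReal (negMulLog (σ {(b, c)}).toReal) :=
        ENNReal.tsum_prod'
    _ ≤ ∑' b, (ENNReal.ofReal (negMulLog (σ.map Prod.fst {b}).toReal)
          + σ.map Prod.fst {b} * ENNReal.ofReal (log M)) := ENNReal.tsum_le_tsum fun b => by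
        rw [measure_map_fst_singleton]
        refine (tsum_ofReal_negMulLog_le_of_support_subset _ ?_ (T b) (hT b)).trans ?_
        · exact measure_map_fst_singleton σ b ▸ prob_le_one
        · exact add_le_add_right (mul_le_mul_right (ENNReal.ofReal_le_ofReal (hlog b)) _) _
    _ = eEnt (σ.map Prod.fst) + (∑' b, σ.map Prod.fst {b}) * ENNReal.ofReal (log M) := by
        rw [ENNReal.tsum_add, ENNReal.tsum_mul_right, eEnt]
    _ ≤ eEnt (σ.map Prod.fst) + ENNReal.ofReal (log M) := by
        gcongr
        exact (mul_le_mul_left hmass _).trans_eq (one_mul _)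

end Entropy

section Kernel

variable {β γ : Type*} [MeasurableSpace β] [MeasurableSpace γ]

lemma measurable_eEnt_kernel [Countable γ] [MeasurableSingletonClass γ] (κ : Kernel β γ) :
    Measurable fun y => eEnt (κ y) :=
  Measurable.tsum fun a => (continuous_negMulLog.measurable.comp
    (κ.measurable_coe (measurableSet_singleton a)).ennreal_toReal).ennreal_ofReal

lemma lintegral_ofReal_negMulLog_le (ν : Measure β) [IsProbabilityMeasure ν] {f : β → ℝ≥0∞}
    (hf : Measurable f) (hf1 : ∀ y, f y ≤ 1) :
    ∫⁻ y, ENNReal.ofReal (negMulLog (f y).toReal) ∂ν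
      ≤ ENNReal.ofReal (negMulLog (∫⁻ y, f y ∂ν).toReal) := by
  have hf01 : ∀ y, (f y).toReal ∈ Icc (0 : ℝ) 1 := fun y =>
    ⟨ENNReal.toReal_nonneg, ENNReal.toReal_le_of_le_ofReal zero_le_one (ENNReal.ofReal_one ▸ hf1 y)⟩
  have hnml01 : ∀ y, negMulLog (f y).toReal ∈ Icc (0 : ℝ) 1 := fun y =>
    ⟨negMulLog_nonneg (hf01 y).1 (hf01 y).2,
      (negMulLog_le_one_sub_self (hf01 y).1).trans (by linarith [(hf01 y).1])⟩
  have hint : Integrable (fun y => (f y).toReal) ν :=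
    .of_bound hf.ennreal_toReal.aestronglyMeasurable 1 (ae_of_all _ fun y => by
      simpa [abs_of_nonneg (hf01 y).1] using (hf01 y).2)
  have hnml_int : Integrable (fun y => negMulLog (f y).toReal) ν :=
    .of_bound (continuous_negMulLog.measurable.comp hf.ennreal_toReal).aestronglyMeasurable 1
      (ae_of_all _ fun y => by simpa [abs_of_nonneg (hnml01 y).1] using (hnml01 y).2)
  have hJensen := (concaveOn_negMulLog.subset Icc_subset_Ici_self (convex_Icc 0 1)).le_map_integral
    continuous_negMulLog.continuousOn isClosed_Icc (ae_of_all _ hf01) hint hnml_int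
  rw [← ofReal_integral_eq_lintegral_ofReal hnml_int (ae_of_all _ fun y => (hnml01 y).1),
    ← integral_toReal hf.aemeasurable (ae_of_all _ fun y => (hf1 y).trans_lt ENNReal.one_lt_top)]
  exact ENNReal.ofReal_le_ofReal hJensen

lemma lintegral_eEnt_le_eEnt_comp [Countable γ] [MeasurableSingletonClass γ] (ν : Measure β)
    [IsProbabilityMeasure ν] (κ : Kernel β γ) [IsMarkovKernel κ] :
    ∫⁻ y, eEnt (κ y) ∂ν ≤ eEnt (κ ∘ₘ ν) := by
  have hatom : ∀ a, Measurable fun y => κ y {a} := fun a =>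
    κ.measurable_coe (measurableSet_singleton a)
  simp only [eEnt]
  refine (lintegral_tsum fun a => (continuous_negMulLog.measurable.comp
    (hatom a).ennreal_toReal).ennreal_ofReal.aemeasurable).trans_le
    (ENNReal.tsum_le_tsum fun a => ?_)
  rw [Measure.bind_apply (measurableSet_singleton a) κ.aemeasurable]
  exact lintegral_ofReal_negMulLog_le ν (hatom a) fun y => prob_le_one

end Kernel

section Quantization

variable {ι : Type*}

noncomputable def quantIndex (k : ℕ) (x : ι → ℝ) : ι → ℤ := fun i => ⌊(k : ℝ) * x i⌋

lemma measurable_quantIndex (k : ℕ) : Measurable (quantIndex (ι := ι) k) :=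
  measurable_pi_iff.2 fun i => ((measurable_pi_apply i).const_mul _).floor

lemma measurable_qz_pi [Finite ι] (k : ℕ) : Measurable fun (x : ι → ℝ) i => qz k (x i) :=
  (measurable_of_countable (fun (j : ι → ℤ) i => (j i : ℝ) / k)).comp (measurable_quantIndex k)

lemma mEnt_map_qz [Finite ι] {k : ℕ} (hk : k ≠ 0) (ρ : Measure (ι → ℝ))
    [IsZeroOrProbabilityMeasure ρ] :
    mEnt (ρ.map fun x i => qz k (x i)) = (eEnt (ρ.map (quantIndex k))).toReal := by
  have hinj : Function.Injective fun (j : ι → ℤ) i => (j i : ℝ) / k := fun j j' h =>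
    funext fun i => by
      have := congrFun h i
      rwa [div_left_inj' (Nat.cast_ne_zero.2 hk), Int.cast_inj] at this
  rw [show (fun x i => qz k (x i)) = (fun (j : ι → ℤ) i => (j i : ℝ) / k) ∘ quantIndex k from rfl,
    ← Measure.map_map (measurable_of_countable _) (measurable_quantIndex k), mEnt_eq_toReal_eEnt,
    eEnt_map_of_injective _ (measurable_of_countable _) hinj]

lemma floor_mul_mem_Icc {k k₀ : ℕ} (hk₀ : k₀ ≠ 0) (x : ℝ) :
    ⌊(k : ℝ) * x⌋ ∈ Finset.Icc ⌊(k : ℝ) * ⌊(k₀ : ℝ) * x⌋ / k₀⌋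
      (⌊(k : ℝ) * ⌊(k₀ : ℝ) * x⌋ / k₀⌋ + k) := by
  have hk₀' : (1 : ℝ) ≤ k₀ := by exact_mod_cast Nat.one_le_iff_ne_zero.2 hk₀
  have hk : (0 : ℝ) ≤ k := k.cast_nonneg
  set q := (k : ℝ) * ⌊(k₀ : ℝ) * x⌋ / k₀
  have hlow : q ≤ k * x := by
    rw [div_le_iff₀ (by positivity)]
    nlinarith [Int.floor_le ((k₀ : ℝ) * x)]
  have hhigh : k * x ≤ q + k := by
    have : (k : ℝ) * x ≤ k * (⌊(k₀ : ℝ) * x⌋ + 1) / k₀ := by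
      rw [le_div_iff₀ (by positivity)]
      nlinarith [Int.lt_floor_add_one ((k₀ : ℝ) * x)]
    have : (k : ℝ) / k₀ ≤ k := div_le_self hk hk₀'
    linarith [show (k : ℝ) * (⌊(k₀ : ℝ) * x⌋ + 1) / k₀ = q + k / k₀ by ring]
  rw [Finset.mem_Icc, ← Int.floor_add_natCast]
  exact ⟨Int.floor_mono hlow, Int.floor_mono hhigh⟩

lemma eEnt_map_quantIndex_le [Fintype ι] (ρ : Measure (ι → ℝ)) [IsZeroOrProbabilityMeasure ρ]
    {k k₀ : ℕ} (hk₀ : k₀ ≠ 0) :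
    eEnt (ρ.map (quantIndex k))
      ≤ eEnt (ρ.map (quantIndex k₀)) + ENNReal.ofReal (Fintype.card ι * log (k + 1)) := by
  classical
  set F : (ι → ℝ) → (ι → ℤ) × (ι → ℤ) := fun x => (quantIndex k₀ x, quantIndex k x)
  have hF : Measurable F := (measurable_quantIndex k₀).prodMk (measurable_quantIndex k)
  set σ := ρ.map F
  set T : (ι → ℤ) → Finset (ι → ℤ) := fun b => Fintype.piFinset fun i =>
    Finset.Icc ⌊(k : ℝ) * b i / k₀⌋ (⌊(k : ℝ) * b i / k₀⌋ + k)
  have hT : ∀ b c, σ {(b, c)} ≠ 0 → c ∈ T b := fun b c h => by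
    rw [Measure.map_apply hF (measurableSet_singleton _)] at h
    obtain ⟨x, hx⟩ := nonempty_of_measure_ne_zero h
    simp only [F, Set.mem_preimage, Set.mem_singleton_iff, Prod.mk.injEq] at hx
    obtain ⟨rfl, rfl⟩ := hx
    exact Fintype.mem_piFinset.2 fun i => floor_mul_mem_Icc hk₀ (x i)
  have hcard : ∀ b, (T b).card = (k + 1) ^ Fintype.card ι := fun b => by
    simp [T, Fintype.card_piFinset, Int.card_Icc, add_assoc]
  calc eEnt (ρ.map (quantIndex k)) = eEnt (σ.map Prod.snd) := by
        rw [Measure.map_map measurable_snd hF]; rfl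
    _ ≤ eEnt σ := eEnt_map_le σ measurable_snd
    _ ≤ eEnt (σ.map Prod.fst) + ENNReal.ofReal (log ((k + 1) ^ Fintype.card ι : ℕ)) :=
        eEnt_le_eEnt_map_fst_add_log σ T hT fun b => (hcard b).le
    _ = eEnt (ρ.map (quantIndex k₀)) + ENNReal.ofReal (Fintype.card ι * log (k + 1)) := by
        rw [Measure.map_map measurable_fst hF]
        push_cast
        rw [log_pow]
        rfl

end Quantization

lemma div_log_le_add_of_le_add_mul_log {a b c : ℝ} {k : ℕ} (hk : 3 ≤ k) (hb : 0 ≤ b)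
    (hc : 0 ≤ c) (h : a ≤ b + c * log (k + 1)) : a / log k ≤ b + 2 * c := by
  have hk' : (3 : ℝ) ≤ k := by exact_mod_cast hk
  have hlog_one : 1 ≤ log k := by
    rw [le_log_iff_exp_le (by positivity)]
    linarith [exp_one_lt_d9]
  have hlog_succ : log (k + 1) ≤ 2 * log k := by
    calc log (k + 1) ≤ log ((k : ℝ) ^ 2) := log_le_log (by positivity) (by nlinarith)
      _ = 2 * log k := by rw [log_pow]; norm_num
  rw [div_le_iff₀ (by positivity)]
  nlinarith

section Convergence

variable {ι β : Type*} [Fintype ι] [MeasurableSpace β]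

lemma tendsto_integral_mEnt_map_qz_div_log (ν : Measure β) [IsProbabilityMeasure ν]
    (κ : Kernel β (ι → ℝ)) [IsMarkovKernel κ] {k₀ : ℕ} (hk₀ : k₀ ≠ 0)
    (hfin : eEnt ((κ ∘ₘ ν).map (quantIndex k₀)) ≠ ∞) {δ : β → ℝ}
    (hδ : ∀ᵐ y ∂ν, Tendsto (fun k : ℕ => mEnt ((κ y).map fun x i => qz k (x i)) / log k) atTop
      (nhds (δ y))) :
    Tendsto (fun k : ℕ => (∫ y, mEnt ((κ y).map fun x i => qz k (x i)) ∂ν) / log k) atTop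
      (nhds (∫ y, δ y ∂ν)) := by
  set W : ℕ → β → ℝ≥0∞ := fun k y => eEnt ((κ y).map (quantIndex k))
  have hW : ∀ k ≠ 0, ∀ y, mEnt ((κ y).map fun x i => qz k (x i)) = (W k y).toReal :=
    fun k hk y => mEnt_map_qz hk (κ y)
  have hWmeas : ∀ k, Measurable (W k) := fun k => by
    simpa only [Kernel.map_apply _ (measurable_quantIndex k)] using
      measurable_eEnt_kernel (κ.map (quantIndex k))
  have hW₀ : ∫⁻ y, W k₀ y ∂ν ≠ ∞ := by
    have := Kernel.IsMarkovKernel.map κ (measurable_quantIndex k₀)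
    refine ne_top_of_le_ne_top hfin ?_
    rw [Measure.map_comp _ _ (measurable_quantIndex k₀)]
    simpa only [Kernel.map_apply _ (measurable_quantIndex k₀)] using
      lintegral_eEnt_le_eEnt_comp ν (κ.map (quantIndex k₀))
  have hbound : ∀ᶠ k : ℕ in atTop, ∀ᵐ y ∂ν,
      ‖mEnt ((κ y).map fun x i => qz k (x i)) / log k‖ ≤ (W k₀ y).toReal + 2 * Fintype.card ι := by
    filter_upwards [eventually_ge_atTop 3] with k hk
    filter_upwards [ae_lt_top (hWmeas k₀) hW₀] with y hy
    have hscale := eEnt_map_quantIndex_le (κ y) (k := k) hk₀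
    rw [hW k (by omega), Real.norm_of_nonneg
      (div_nonneg ENNReal.toReal_nonneg (log_natCast_nonneg k))]
    refine div_log_le_add_of_le_add_mul_log hk ENNReal.toReal_nonneg (Nat.cast_nonneg _) ?_
    refine (ENNReal.toReal_le_add hscale hy.ne ENNReal.ofReal_ne_top).trans_eq ?_
    rw [ENNReal.toReal_ofReal (mul_nonneg (Nat.cast_nonneg _) (log_nonneg (by simp)))]
  have hmeas : ∀ᶠ k : ℕ in atTop,
      AEStronglyMeasurable (fun y => mEnt ((κ y).map fun x i => qz k (x i)) / log k) ν := by
    filter_upwards [eventually_ne_atTop 0] with k hk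
    simp_rw [hW k hk]
    exact ((hWmeas k).ennreal_toReal.div_const _).aestronglyMeasurable
  refine (tendsto_integral_filter_of_dominated_convergence _ hmeas hbound
    ((integrable_toReal_of_lintegral_ne_top (hWmeas k₀).aemeasurable hW₀).add
      (integrable_const _)) hδ).congr fun k => ?_
  exact integral_div _ _

end Convergence

lemma condEnt_comp {Ω α β γ : Type*} [MeasurableSpace Ω] [MeasurableSpace α] [MeasurableSpace β]
    [MeasurableSpace γ] [StandardBorelSpace α] [Nonempty α] [StandardBorelSpace γ] [Nonempty γ]
    (P : Measure Ω) [IsFiniteMeasure P] {Z : Ω → α} (hZ : AEMeasurable Z P) (Y : Ω → β)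
    {f : α → γ} (hf : Measurable f) :
    condEnt P (f ∘ Z) Y = ∫ y, mEnt ((condDistrib Z Y P y).map f) ∂(P.map Y) := by
  refine integral_congr_ae ?_
  filter_upwards [condDistrib_comp Y hZ hf] with y hy
  rw [hy, Kernel.map_apply _ hf]

theorem relative_loss_eq_ratio_of_information_dimensions_general
    {Ω : Type*} [MeasurableSpace Ω] (P : Measure Ω) [IsProbabilityMeasure P]
    {N : ℕ} (X : Ω → (Fin N → ℝ)) (hX : Measurable X)
    {β : Type*} [MeasurableSpace β] (g : (Fin N → ℝ) → β) (hg : Measurable g)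
    (d : ℝ) (hd_pos : 0 < d)
    (hdim : Tendsto (fun k : ℕ =>
        mEnt (P.map (fun ω i => qz k (X ω i))) / Real.log k) atTop (nhds d))
    (δ : β → ℝ)
    (hconddim : ∀ᵐ y ∂(P.map (fun ω => g (X ω))),
      Tendsto (fun k : ℕ =>
          mEnt (((condDistrib X (fun ω => g (X ω)) P) y).map (fun x i => qz k (x i))) /
            Real.log k) atTop (nhds (δ y))) :
    Tendsto (fun k : ℕ =>
        condEnt P (fun ω i => qz k (X ω i)) (fun ω => g (X ω)) /
          mEnt (P.map (fun ω i => qz k (X ω i)))) atTop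
      (nhds ((∫ y, δ y ∂(P.map (fun ω => g (X ω)))) / d)) := by
  set Y := fun ω => g (X ω)
  have hY : Measurable Y := hg.comp hX
  have : IsProbabilityMeasure (P.map Y) := Measure.isProbabilityMeasure_map hY.aemeasurable
  have hmarginal : ∀ k, P.map (fun ω i => qz k (X ω i)) = (P.map X).map fun x i => qz k (x i) :=
    fun k => (Measure.map_map (measurable_qz_pi k) hX).symm
  obtain ⟨k₀, hk₀_pos, hk₀⟩ := ((hdim.eventually (eventually_gt_nhds hd_pos)).and
    (eventually_ne_atTop 0)).exists
  have hfin : eEnt ((condDistrib X Y P ∘ₘ P.map Y).map (quantIndex k₀)) ≠ ∞ := by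
    rw [condDistrib_comp_map hY.aemeasurable hX.aemeasurable]
    intro htop
    simp [hmarginal, mEnt_map_qz hk₀, htop] at hk₀_pos
  have hnum := tendsto_integral_mEnt_map_qz_div_log (P.map Y) (condDistrib X Y P) hk₀ hfin hconddim
  simp_rw [← condEnt_comp P hX.aemeasurable Y (measurable_qz_pi _)] at hnum
  refine (hnum.div hdim hd_pos.ne').congr' ?_
  filter_upwards [eventually_gt_atTop 1] with k hk
  exact div_div_div_cancel_right₀ (log_pos (by exact_mod_cast hk)).ne' _ _

/-- If `X` has positive finite information dimension
`d(X) = lim H(X̂ₙ)/log n`, `Y = g(X)` for measurable `g`, and the conditional information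
dimension `d(X|Y=y)` exists and is finite for `P_Y`-a.e. `y` (with integrable average), then the
relative information loss exists and equals `l(X→Y) = d(X|Y)/d(X)` where
`d(X|Y) = ∫ d(X|Y=y) dP_Y(y)`. -/
theorem relative_loss_eq_ratio_of_information_dimensions
    {Ω : Type*} [MeasurableSpace Ω] (P : Measure Ω) [IsProbabilityMeasure P]
    {N : ℕ} (X : Ω → (Fin N → ℝ)) (hX : Measurable X)
    {β : Type*} [MeasurableSpace β] (g : (Fin N → ℝ) → β) (hg : Measurable g)
    (d : ℝ) (hd_pos : 0 < d)
    (hdim : Tendsto (fun k : ℕ =>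
        mEnt (P.map (fun ω i => qz k (X ω i))) / Real.log k) atTop (nhds d))
    (δ : β → ℝ)
    (hδint : Integrable δ (P.map (fun ω => g (X ω))))
    (hconddim : ∀ᵐ y ∂(P.map (fun ω => g (X ω))),
      Tendsto (fun k : ℕ =>
          mEnt (((condDistrib X (fun ω => g (X ω)) P) y).map (fun x i => qz k (x i))) /
            Real.log k) atTop (nhds (δ y))) :
    Tendsto (fun k : ℕ =>
        condEnt P (fun ω i => qz k (X ω i)) (fun ω => g (X ω)) /
          mEnt (P.map (fun ω i => qz k (X ω i)))) atTop
      (nhds ((∫ y, δ y ∂(P.map (fun ω => g (X ω)))) / d)) :=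
  relative_loss_eq_ratio_of_information_dimensions_general P X hX g hg d hd_pos hdim δ hconddim
end

section
/- Let X, Y, Z be discrete random variables with finite Shannon entropy such that Y = g(X) and Z = h(Y) for deterministic functions g and h. Then the relative information loss satisfies the cascade formula l(X→Z) = l(X→Y) + l(Y→Z) − l(X→Y)·l(Y→Z). -/
/-!
Conditioned on `g X = b`, the variable `X` is distributed on the fibre `g⁻¹{b}` with weights
`p a / q b`, and `q b · H(X | g X = b) = ∑_{a ∈ g⁻¹{b}} -p a log p a + q b log q b`. Summing
over `b` gives the chain rule `H(X | g X) = H(X) - H(g X)`, so `1 - l(X → Y) = H(Y) / H(X)`, and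
the cascade formula is the factorisation `H(Z) / H(X) = (H(Y) / H(X)) · (H(Z) / H(Y))`; the
degenerate cases where some entropy vanishes are handled by `H(X) ≥ H(Y) ≥ H(Z) ≥ 0`.
-/

open MeasureTheory ProbabilityTheory Filter Real Set

theorem mul_tsum_negMulLog_div {ι : Type*} {p : ι → ℝ} {q : ℝ} (hp : ∀ i, 0 ≤ p i)
    (hpq : HasSum p q) (hF : Summable fun i => negMulLog (p i)) :
    q * ∑' i, negMulLog (p i / q) = ∑' i, negMulLog (p i) - negMulLog q := by
  obtain rfl | hq := (hpq.nonneg hp).eq_or_lt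
  · obtain rfl : p = 0 := (hasSum_zero_iff_of_nonneg hp).1 hpq
    simp
  have hterm (i : ι) : q * negMulLog (p i / q) = negMulLog (p i) + p i * log q := by
    have := negMulLog_mul q (p i / q)
    rw [mul_div_cancel₀ _ hq.ne'] at this
    have hlog : p i / q * negMulLog q = -(p i * log q) := by
      rw [negMulLog]
      field_simp
    linarith
  rw [← tsum_mul_left, tsum_congr hterm, hF.tsum_add (hpq.summable.mul_right _),
    tsum_mul_right, hpq.tsum_eq, negMulLog]
  ring

section Discrete

variable {α β : Type*} [MeasurableSpace α] [MeasurableSingletonClass α] [Countable α]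
  [MeasurableSpace β] [MeasurableSingletonClass β]

theorem hasSum_measureReal_fiber (μ : Measure α) [IsFiniteMeasure μ] (f : α → β) (b : β) :
    HasSum (fun a : f ⁻¹' {b} => μ.real {(a : α)}) ((μ.map f).real {b}) := by
  have hfiber : ∑' a : f ⁻¹' {b}, μ {(a : α)} = μ.map f {b} := by
    rw [Measure.map_apply (measurable_of_countable f) (measurableSet_singleton b)]
    simpa using tsum_measure_preimage_singleton (μ := μ) (f := id) (Set.to_countable (f ⁻¹' {b}))
      fun a _ => measurableSet_singleton a
  have := ENNReal.hasSum_toReal (f := fun a : f ⁻¹' {b} => μ {(a : α)})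
    (hfiber ▸ measure_ne_top _ _)
  rwa [← ENNReal.tsum_toReal_eq fun _ => measure_ne_top _ _, hfiber] at this

theorem integral_eq_tsum_of_summable [Countable β] {μ : Measure β} [IsFiniteMeasure μ]
    {f : β → ℝ} (hf : Summable fun b => μ.real {b} * ‖f b‖) :
    ∫ b, f b ∂μ = ∑' b, μ.real {b} * f b := by
  conv_lhs => rw [← μ.sum_smul_dirac]
  exact integral_sum_dirac_eq_tsum (fun b => measure_ne_top μ _) hf

end Discrete

theorem mEnt_nonneg {α : Type*} [MeasurableSpace α] (μ : Measure α)
    [IsZeroOrProbabilityMeasure μ] : 0 ≤ mEnt μ :=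
  tsum_nonneg fun _ => negMulLog_nonneg ENNReal.toReal_nonneg measureReal_le_one

section Chain

variable {Ω α β : Type*} [MeasurableSpace Ω]
  [MeasurableSpace α] [MeasurableSingletonClass α] [Countable α] [StandardBorelSpace α] [Nonempty α]
  [MeasurableSpace β] [MeasurableSingletonClass β]

theorem condDistrib_comp_real_singleton (P : Measure Ω) [IsFiniteMeasure P] {X : Ω → α}
    (hX : Measurable X) (f : α → β) {b : β} (hb : P.map (fun ω => f (X ω)) {b} ≠ 0) (a : α) :
    (condDistrib X (fun ω => f (X ω)) P b).real {a} =
      (f ⁻¹' {b}).indicator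
        (fun a => (P.map X).real {a} / (P.map fun ω => f (X ω)).real {b}) a := by
  have hjoint : P.map (fun ω => (f (X ω), X ω)) = (P.map X).map fun a => (f a, a) :=
    (Measure.map_map (g := fun a => (f a, a)) (measurable_of_countable _) hX).symm
  rw [measureReal_def, condDistrib_apply_of_ne_zero hX b hb, hjoint,
    Measure.map_apply (measurable_of_countable _)
      ((measurableSet_singleton b).prod (measurableSet_singleton a))]
  by_cases hab : f a = b
  · have hpre : (fun a => (f a, a)) ⁻¹' ({b} ×ˢ {a}) = {a} := by
      ext x
      simp only [mem_preimage, mem_prod, mem_singleton_iff]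
      grind
    rw [hpre, indicator_of_mem (show a ∈ f ⁻¹' {b} from hab), ENNReal.toReal_mul,
      ENNReal.toReal_inv, div_eq_inv_mul, measureReal_def, measureReal_def]
  · have hpre : (fun a => (f a, a)) ⁻¹' ({b} ×ˢ {a}) = ∅ := by
      ext x
      simp only [mem_preimage, mem_prod, mem_singleton_iff, mem_empty_iff_false, iff_false]
      grind
    rw [hpre, indicator_of_notMem (show a ∉ f ⁻¹' {b} from hab)]
    simp

theorem measureReal_mul_mEnt_condDistrib_comp (P : Measure Ω) [IsFiniteMeasure P] {X : Ω → α}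
    (hX : Measurable X) (f : α → β) (hHX : Summable fun a => negMulLog ((P.map X).real {a}))
    (b : β) :
    (P.map fun ω => f (X ω)).real {b} * mEnt (condDistrib X (fun ω => f (X ω)) P b) =
      ∑' a : f ⁻¹' {b}, negMulLog ((P.map X).real {(a : α)}) -
        negMulLog ((P.map fun ω => f (X ω)).real {b}) := by
  have hfiber := hasSum_measureReal_fiber (P.map X) f b
  rw [Measure.map_map (measurable_of_countable f) hX, Function.comp_def] at hfiber
  rw [← mul_tsum_negMulLog_div (fun _ => measureReal_nonneg) hfiber (hHX.subtype _)]
  -- off the support of the law of `f ∘ X` the conditional distribution is junk, but has weight 0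
  by_cases hb : P.map (fun ω => f (X ω)) {b} = 0
  · simp [measureReal_def, hb]
  congr 1
  rw [mEnt, tsum_subtype (f ⁻¹' {b}) fun a =>
    negMulLog ((P.map X).real {a} / (P.map fun ω => f (X ω)).real {b})]
  refine tsum_congr fun a => ?_
  rw [← measureReal_def, condDistrib_comp_real_singleton P hX f hb a]
  by_cases ha : a ∈ f ⁻¹' {b}
  · simp only [indicator_of_mem ha]
  · simp only [indicator_of_notMem ha, negMulLog_zero]

theorem summable_negMulLog_map_comp (P : Measure Ω) [IsProbabilityMeasure P] {X : Ω → α}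
    (hX : Measurable X) (f : α → β) (hHX : Summable fun a => negMulLog ((P.map X).real {a})) :
    Summable fun b => negMulLog ((P.map fun ω => f (X ω)).real {b}) := by
  refine (hHX.hasSum.tsum_fiberwise f).summable.of_nonneg_of_le
    (fun b => negMulLog_nonneg measureReal_nonneg measureReal_le_one) fun b => ?_
  have hw := measureReal_mul_mEnt_condDistrib_comp P hX f hHX b
  have hw_nonneg := mul_nonneg (measureReal_nonneg (μ := P.map fun ω => f (X ω)) (s := {b}))
    (mEnt_nonneg (condDistrib X (fun ω => f (X ω)) P b))
  linarith

variable [Countable β]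

theorem condEnt_comp_eq_sub (P : Measure Ω) [IsProbabilityMeasure P] {X : Ω → α}
    (hX : Measurable X) (f : α → β) (hHX : Summable fun a => negMulLog ((P.map X).real {a})) :
    condEnt P X (fun ω => f (X ω)) = mEnt (P.map X) - mEnt (P.map fun ω => f (X ω)) := by
  have hS := hHX.hasSum.tsum_fiberwise f
  have hHY := summable_negMulLog_map_comp P hX f hHX
  have hw := measureReal_mul_mEnt_condDistrib_comp P hX f hHX
  have hsum : Summable fun b =>
      (P.map fun ω => f (X ω)).real {b} * ‖mEnt (condDistrib X (fun ω => f (X ω)) P b)‖ := by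
    simp_rw [Real.norm_of_nonneg (mEnt_nonneg _), hw]
    exact hS.summable.sub hHY
  rw [condEnt, integral_eq_tsum_of_summable hsum, tsum_congr hw, hS.summable.tsum_sub hHY,
    hS.tsum_eq]
  rfl

theorem mEnt_map_comp_le (P : Measure Ω) [IsProbabilityMeasure P] {X : Ω → α}
    (hX : Measurable X) (f : α → β) (hHX : Summable fun a => negMulLog ((P.map X).real {a})) :
    mEnt (P.map fun ω => f (X ω)) ≤ mEnt (P.map X) :=
  sub_nonneg.1 <| condEnt_comp_eq_sub P hX f hHX ▸ integral_nonneg fun _ => mEnt_nonneg _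

end Chain

theorem sub_div_cascade {a b c : ℝ} (hc : 0 ≤ c) (hcb : c ≤ b) (hba : b ≤ a) :
    (a - c) / a = (a - b) / a + (b - c) / b - (a - b) / a * ((b - c) / b) := by
  obtain rfl | hb := (hc.trans hcb).eq_or_lt
  · obtain rfl : c = 0 := le_antisymm hcb hc
    simp
  field_simp [hb.ne', (hb.trans_le hba).ne']
  ring

theorem relative_loss_cascade_discrete_general
    {Ω α β γ : Type*} [MeasurableSpace Ω]
    [MeasurableSpace α] [MeasurableSingletonClass α] [Countable α]
      [StandardBorelSpace α] [Nonempty α]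
    [MeasurableSpace β] [MeasurableSingletonClass β] [Countable β]
      [StandardBorelSpace β] [Nonempty β]
    [MeasurableSpace γ] [MeasurableSingletonClass γ] [Countable γ]
    (P : Measure Ω) [IsProbabilityMeasure P]
    (X : Ω → α) (hX : Measurable X)
    (g : α → β) (h : β → γ)
    (hHX : Summable (fun a => Real.negMulLog ((P.map X) {a}).toReal)) :
    condEnt P X (fun ω => h (g (X ω))) / mEnt (P.map X) =
      condEnt P X (fun ω => g (X ω)) / mEnt (P.map X)
        + condEnt P (fun ω => g (X ω)) (fun ω => h (g (X ω))) /
            mEnt (P.map (fun ω => g (X ω)))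
        - (condEnt P X (fun ω => g (X ω)) / mEnt (P.map X))
            * (condEnt P (fun ω => g (X ω)) (fun ω => h (g (X ω))) /
                mEnt (P.map (fun ω => g (X ω)))) := by
  have hY : Measurable fun ω => g (X ω) := (measurable_of_countable g).comp hX
  have hHY := summable_negMulLog_map_comp P hX g hHX
  rw [condEnt_comp_eq_sub P hX (fun a => h (g a)) hHX, condEnt_comp_eq_sub P hX g hHX,
    condEnt_comp_eq_sub P hY h hHY]
  exact sub_div_cascade (mEnt_nonneg _) (mEnt_map_comp_le P hY h hHY)
    (mEnt_map_comp_le P hX g hHX)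

/-- For discrete random variables `X`, `Y = g(X)`, `Z = h(Y)` with finite
Shannon entropy, the relative information loss `l(X→Y) = H(X|Y)/H(X)` satisfies the cascade
formula `l(X→Z) = l(X→Y) + l(Y→Z) − l(X→Y)·l(Y→Z)`. -/
theorem relative_loss_cascade_discrete
    {Ω α β γ : Type*} [MeasurableSpace Ω]
    [MeasurableSpace α] [MeasurableSingletonClass α] [Countable α]
      [StandardBorelSpace α] [Nonempty α]
    [MeasurableSpace β] [MeasurableSingletonClass β] [Countable β]
      [StandardBorelSpace β] [Nonempty β]
    [MeasurableSpace γ] [MeasurableSingletonClass γ] [Countable γ]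
      [StandardBorelSpace γ] [Nonempty γ]
    (P : Measure Ω) [IsProbabilityMeasure P]
    (X : Ω → α) (hX : Measurable X)
    (g : α → β) (hg : Measurable g) (h : β → γ) (hh : Measurable h)
    (hHX : Summable (fun a => Real.negMulLog ((P.map X) {a}).toReal))
    (hHY : Summable (fun b => Real.negMulLog ((P.map (fun ω => g (X ω))) {b}).toReal))
    (hHZ : Summable (fun c => Real.negMulLog ((P.map (fun ω => h (g (X ω)))) {c}).toReal)) :
    condEnt P X (fun ω => h (g (X ω))) / mEnt (P.map X) =
      condEnt P X (fun ω => g (X ω)) / mEnt (P.map X)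
        + condEnt P (fun ω => g (X ω)) (fun ω => h (g (X ω))) /
            mEnt (P.map (fun ω => g (X ω)))
        - (condEnt P X (fun ω => g (X ω)) / mEnt (P.map X))
            * (condEnt P (fun ω => g (X ω)) (fun ω => h (g (X ω))) /
                mEnt (P.map (fun ω => g (X ω)))) :=
  relative_loss_cascade_discrete_general P X hX g h hHX
end
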